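/- arXiv:1704.05884 — 3 statements merged into one kernel-verified Lean document; each statement's English description precedes it below -/
import Mathlib

section
/- Let $\ell_n$ denote the number of $n$-step self-avoiding walks on the ladder graph $\mathbb{L}$ (the graph $\mathbb{Z} \times \{0,1\}$ with nearest-neighbour edges) starting from a fixed vertex. Then $\lim_{n\to\infty} \ell_n^{1/n} = \frac{1+\sqrt 5}{2}$, the golden mean. -/
/-!
Two consecutive vertical steps of a walk on the ladder return to their starting vertex, so the
vertical steps of a self-avoiding walk form one of the `fib (n + 2)` binary strings without two
adjacent ones. Conversely every such string, with all horizontal steps taken to the right, is a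
self-avoiding staircase; hence `φ ^ n ≤ fib (n + 2) ≤ ℓ_n`.

Only two edges join column `k` to column `k + 1`, one in each row, so the column coordinate of a
self-avoiding walk crosses each gap at most twice. This forces the horizontal direction to reverse
at most twice, and the walk is determined by its vertical steps, its initial direction and its
two reversal times: `ℓ_n ≤ 2 (n + 1) ^ 2 fib (n + 2)`. The polynomial factor disappears under the
`n`-th root.
-/

open Filter

/-- The ladder graph `ℤ × {0,1}`: `(i,a) ~ (j,b)` iff `|i-j| = 1` and `a = b`,
or `i = j` and `a ≠ b`. -/
def ladderGraph : SimpleGraph (ℤ × Bool) where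
  Adj p q := (|p.1 - q.1| = 1 ∧ p.2 = q.2) ∨ (p.1 = q.1 ∧ p.2 ≠ q.2)
  symm := by
    refine ⟨?_⟩
    rintro ⟨i, a⟩ ⟨j, b⟩ (⟨h1, h2⟩ | ⟨h1, h2⟩)
    · exact Or.inl ⟨by rw [abs_sub_comm]; exact h1, h2.symm⟩
    · exact Or.inr ⟨h1.symm, h2.symm⟩
  loopless := by
    refine ⟨?_⟩
    rintro ⟨i, a⟩ (⟨h1, _⟩ | ⟨_, h2⟩)
    · simp at h1
    · exact h2 rfl

/-- The number of `n`-step self-avoiding walks on the ladder from `(0, false)`. -/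
noncomputable def ladderSawCount (n : ℕ) : ℕ :=
  Nat.card {p : Fin (n + 1) → ℤ × Bool // p 0 = (0, false) ∧ Function.Injective p ∧
    ∀ i : Fin n, ladderGraph.Adj (p i.castSucc) (p i.succ)}

open Real Topology goldenRatio

def sparseBits (n : ℕ) : Set (ℕ → Bool) :=
  {v | (∀ i, n ≤ i → v i = false) ∧ ∀ i, v i = true → v (i + 1) = false}

instance (n : ℕ) : Finite (sparseBits n) :=
  Finite.of_injective (fun v (i : Fin n) => v.1 i) fun v w h => Subtype.ext <| funext fun i => by
    by_cases hi : i < n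
    · exact congrFun h ⟨i, hi⟩
    · rw [v.2.1 i (by omega), w.2.1 i (by omega)]

def consBit (b : Bool) (v : ℕ → Bool) : ℕ → Bool
  | 0 => b
  | i + 1 => v i

lemma consBit_mem_sparseBits {n : ℕ} {v : ℕ → Bool} (hv : v ∈ sparseBits n) (b : Bool)
    (hb : b = true → v 0 = false) : consBit b v ∈ sparseBits (n + 1) := by
  refine ⟨fun i hi => ?_, fun i hi => ?_⟩
  · obtain ⟨i, rfl⟩ : ∃ j, i = j + 1 := ⟨i - 1, by omega⟩
    exact hv.1 i (by omega)
  · cases i with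
    | zero => exact hb hi
    | succ i => exact hv.2 i hi

lemma shift_mem_sparseBits {n : ℕ} {v : ℕ → Bool} (hv : v ∈ sparseBits (n + 1)) :
    (fun i => v (i + 1)) ∈ sparseBits n :=
  ⟨fun i hi => hv.1 (i + 1) (by omega), fun i hi => hv.2 (i + 1) hi⟩

def sparseBitsEquiv (n : ℕ) : sparseBits (n + 2) ≃ sparseBits (n + 1) ⊕ sparseBits n where
  toFun v := if v.1 0 then .inr ⟨_, shift_mem_sparseBits (shift_mem_sparseBits v.2)⟩
    else .inl ⟨_, shift_mem_sparseBits v.2⟩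
  invFun
    | .inl u => ⟨consBit false u, consBit_mem_sparseBits u.2 false (by simp)⟩
    | .inr u => ⟨consBit true (consBit false u), consBit_mem_sparseBits
        (consBit_mem_sparseBits u.2 false (by simp)) true fun _ => rfl⟩
  left_inv v := by
    have h1 : v.1 0 = true → v.1 1 = false := v.2.2 0
    ext (_ | _ | i) <;> by_cases h0 : v.1 0 <;> simp_all [consBit]
  right_inv u := by
    rcases u with u | u <;> simp [consBit]

theorem card_sparseBits : ∀ n, Nat.card (sparseBits n) = Nat.fib (n + 2)
  | 0 => by
    have : sparseBits 0 = {fun _ => false} := by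
      ext v
      simp only [sparseBits, Set.mem_ofPred_eq, Set.mem_singleton_iff, zero_le, true_implies]
      exact ⟨fun h => funext h.1, fun h => by subst h; simp⟩
    simp [this]
  | 1 => by
    have e : sparseBits 1 ≃ Bool :=
      ⟨fun v => v.1 0,
        fun b => ⟨consBit b fun _ => false, consBit_mem_sparseBits (by simp [sparseBits]) b
          fun _ => rfl⟩,
        fun v => by
          ext (_ | i)
          · rfl
          · exact (v.2.1 (i + 1) (by omega)).symm,
        fun _ => rfl⟩
    simp [Nat.card_congr e, Nat.fib_add_two]
  | n + 2 => by
    rw [Nat.card_congr (sparseBitsEquiv n), Nat.card_sum, card_sparseBits n,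
      card_sparseBits (n + 1), Nat.fib_add_two (n := n + 2)]
    ring

lemma goldenRatio_pow_le_fib (n : ℕ) : φ ^ n ≤ Nat.fib (n + 2) := by
  have hψ : 0 ≤ (1 + ψ) * Nat.fib n :=
    mul_nonneg (by linarith [neg_one_lt_goldenConj]) (by positivity)
  rw [← fib_succ_sub_goldenConj_mul_fib, Nat.fib_add_two, Nat.cast_add]
  linarith

lemma fib_le_goldenRatio_pow (n : ℕ) : (Nat.fib (n + 1) : ℝ) ≤ φ ^ n := by
  have hψ : ψ * Nat.fib n ≤ 0 := mul_nonpos_of_nonpos_of_nonneg goldenConj_neg.le (by positivity)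
  rw [← fib_succ_sub_goldenConj_mul_fib]
  linarith

theorem tendsto_rpow_one_div_of_pow_le_of_le {u : ℕ → ℝ} {r C : ℝ} (k : ℕ) (hr : 0 < r)
    (hlo : ∀ n, r ^ n ≤ u n) (hhi : ∀ n, u n ≤ C * (n + 1) ^ k * r ^ n) :
    Tendsto (fun n : ℕ => u n ^ ((1 : ℝ) / n)) atTop (𝓝 r) := by
  have hC : 0 < C := by simpa using one_pos.trans_le ((hlo 0).trans (hhi 0))
  have hn : Tendsto (fun n : ℕ => (1 : ℝ) / n) atTop (𝓝 0) := tendsto_one_div_atTop_nhds_zero_nat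
  have hC1 : Tendsto (fun n : ℕ => C ^ ((1 : ℝ) / n)) atTop (𝓝 1) := by
    simpa using tendsto_const_nhds.rpow hn (.inl hC.ne')
  have hroot : Tendsto (fun n : ℕ => ((n : ℝ) + 1) ^ ((1 : ℝ) / n)) atTop (𝓝 1) := by
    have := (tendsto_rpow_div_mul_add 1 1 (-1) one_ne_zero.symm).comp
      (tendsto_atTop_add_const_right _ 1 tendsto_natCast_atTop_atTop)
    refine this.congr fun n => ?_
    simp
  have hupper := (hC1.mul (hroot.pow k)).mul_const r
  rw [one_pow, one_mul, one_mul] at hupper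
  refine tendsto_of_tendsto_of_tendsto_of_le_of_le' tendsto_const_nhds hupper ?_ ?_ <;>
    filter_upwards [eventually_ne_atTop 0] with n hn0
  · calc r = (r ^ n) ^ ((1 : ℝ) / n) := by
          rw [one_div, pow_rpow_inv_natCast hr.le hn0]
      _ ≤ u n ^ ((1 : ℝ) / n) := by gcongr; exact hlo n
  · calc u n ^ ((1 : ℝ) / n) ≤ (C * (n + 1) ^ k * r ^ n) ^ ((1 : ℝ) / n) := by
          gcongr
          · exact (pow_pos hr n).le.trans (hlo n)
          · exact hhi n
      _ = C ^ ((1 : ℝ) / n) * (((n : ℝ) + 1) ^ ((1 : ℝ) / n)) ^ k * r := by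
          rw [mul_rpow (by positivity) (by positivity), mul_rpow hC.le (by positivity),
            ← rpow_pow_comm (by positivity), one_div, pow_rpow_inv_natCast hr.le hn0]

lemma exists_first_le (P : ℕ → Prop) (n : ℕ) :
    ∃ a ≤ n, (∀ i < a, ¬ P i) ∧ (a < n → P a) := by
  classical
  have h : ∃ a, n ≤ a ∨ P a := ⟨n, .inl le_rfl⟩
  exact ⟨Nat.find h, Nat.find_min' h (.inl le_rfl), fun i hi hP => Nat.find_min h hi (.inr hP),
    fun ha => (Nat.find_spec h).resolve_left (by omega)⟩

lemma le_of_forall_le_succ {x : ℕ → ℤ} {a b : ℕ} (hab : a ≤ b)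
    (h : ∀ i, a ≤ i → i < b → x i ≤ x (i + 1)) : x a ≤ x b := by
  induction b, hab using Nat.le_induction with
  | base => rfl
  | succ b hab ih => exact (ih fun i h1 h2 => h i h1 (by omega)).trans (h b hab (by omega))

lemma le_of_forall_succ_le {x : ℕ → ℤ} {a b : ℕ} (hab : a ≤ b)
    (h : ∀ i, a ≤ i → i < b → x (i + 1) ≤ x i) : x b ≤ x a := by
  simpa using le_of_forall_le_succ (x := fun i => -x i) hab fun i h1 h2 => neg_le_neg (h i h1 h2)

def IsCrossing (x : ℕ → ℤ) (k : ℤ) (i : ℕ) : Prop :=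
  x i = k ∧ x (i + 1) = k + 1 ∨ x i = k + 1 ∧ x (i + 1) = k

-- `x a ≤ k ↔ k < x b` says that `x a` and `x b` lie on opposite sides of the gap `(k, k + 1)`.
lemma exists_isCrossing {x : ℕ → ℤ} {k : ℤ} {a b : ℕ} (hab : a ≤ b)
    (hstep : ∀ i, a ≤ i → i < b → |x (i + 1) - x i| ≤ 1) (hk : x a ≤ k ↔ k < x b) :
    ∃ i, a ≤ i ∧ i < b ∧ IsCrossing x k i := by
  induction b, hab using Nat.le_induction with
  | base => omega
  | succ b hab ih =>
    by_cases h : x a ≤ k ↔ k < x b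
    · obtain ⟨i, hai, hib, hi⟩ := ih (fun i h1 h2 => hstep i h1 (by omega)) h
      exact ⟨i, hai, by omega, hi⟩
    · have := abs_le.mp (hstep b hab (by omega))
      exact ⟨b, hab, by omega, by unfold IsCrossing; omega⟩

structure IsTwoCrossingPath (x : ℕ → ℤ) (n : ℕ) : Prop where
  abs_sub_le_one : ∀ i < n, |x (i + 1) - x i| ≤ 1
  not_three_crossings : ∀ k i j l, i < j → j < l → l < n →
    IsCrossing x k i → IsCrossing x k j → IsCrossing x k l → False

def twoTurn (ε : ℤ) (a c i : ℕ) : ℤ := if a ≤ i ∧ i < c then -ε else ε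

namespace IsTwoCrossingPath

variable {x : ℕ → ℤ} {n : ℕ}

lemma neg (hx : IsTwoCrossingPath x n) : IsTwoCrossingPath (fun i => -x i) n where
  abs_sub_le_one i hi := by
    rw [neg_sub_neg, abs_sub_comm]
    exact hx.abs_sub_le_one i hi
  not_three_crossings k i j l hij hjl hln hi hj hl := by
    simp only [IsCrossing] at hi hj hl
    exact hx.not_three_crossings (-k - 1) i j l hij hjl hln (by unfold IsCrossing; omega)
      (by unfold IsCrossing; omega) (by unfold IsCrossing; omega)

lemma false_of_alternating (hx : IsTwoCrossingPath x n) (k : ℤ) (a₀ a₁ a₂ a₃ : ℕ)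
    (h₀₁ : a₀ ≤ a₁) (h₁₂ : a₁ ≤ a₂) (h₂₃ : a₂ ≤ a₃) (h₃ : a₃ ≤ n)
    (hk₀₁ : x a₀ ≤ k ↔ k < x a₁) (hk₁₂ : x a₁ ≤ k ↔ k < x a₂) (hk₂₃ : x a₂ ≤ k ↔ k < x a₃) :
    False := by
  have step := hx.abs_sub_le_one
  obtain ⟨i, -, hi, hci⟩ := exists_isCrossing h₀₁ (fun i _ h => step i (by omega)) hk₀₁
  obtain ⟨j, hj, hj', hcj⟩ := exists_isCrossing h₁₂ (fun i _ h => step i (by omega)) hk₁₂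
  obtain ⟨l, hl, hl', hcl⟩ := exists_isCrossing h₂₃ (fun i _ h => step i (by omega)) hk₂₃
  exact hx.not_three_crossings k i j l (by omega) (by omega) (by omega) hci hcj hcl

lemma false_of_zigzag (hx : IsTwoCrossingPath x n) {t u w : ℕ} (htu : t < u) (huw : u < w)
    (hwn : w < n) (h0t : x 0 < x t) (hut : x u < x t) (hup : x u < x (u + 1))
    (hdown : x (w + 1) < x w) : False := by
  have := abs_le.mp (hx.abs_sub_le_one u (by omega))
  have := abs_le.mp (hx.abs_sub_le_one w hwn)
  rcases le_or_gt (x 0) (x u) with h₀ | h₀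
  · apply hx.false_of_alternating (x u) 0 t u (u + 1) <;> omega
  rcases le_or_gt (x w) (x u + 1) with h₁ | h₁
  · apply hx.false_of_alternating (x u) t u (u + 1) (w + 1) <;> omega
  rcases lt_or_ge (x 0) (x w) with h₂ | h₂
  · apply hx.false_of_alternating (x 0) 0 t u w <;> omega
  · apply hx.false_of_alternating (x w - 1) t u w (w + 1) <;> omega

lemma exists_twoTurn_one (hx : IsTwoCrossingPath x n) {i₀ : ℕ} (hi₀ : i₀ < n)
    (hflat : ∀ i < i₀, x (i + 1) = x i) (hup : x i₀ < x (i₀ + 1)) :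
    ∃ a c : Fin (n + 1), ∀ i < n, x (i + 1) ≠ x i → x (i + 1) - x i = twoTurn 1 a c i := by
  -- `a` is the first descent and `c` the first ascent after it; a descent after `c` is a zigzag.
  obtain ⟨a, han, hbefore_a, ha⟩ := exists_first_le (fun i => x (i + 1) < x i) n
  obtain ⟨c, hcn, hbefore_c, hc⟩ := exists_first_le (fun i => a < i ∧ x i < x (i + 1)) n
  refine ⟨⟨a, by omega⟩, ⟨c, by omega⟩, fun i hi hne => ?_⟩
  have hstep := abs_le.mp (hx.abs_sub_le_one i hi)
  simp only [twoTurn]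
  split_ifs with hac
  · rcases hac.1.eq_or_lt with rfl | hai
    · linarith [ha hi]
    · have := hbefore_c i hac.2
      omega
  · have hnot_down := hbefore_a i
    by_contra hi_down
    have hia : a ≤ i := by by_contra; omega
    have hc' := hc (by omega)
    have hci : c < i := by
      by_contra
      obtain rfl : c = i := by omega
      omega
    have hi₀a : i₀ < a := by
      by_contra! h
      have := ha (by omega)
      rcases h.eq_or_lt with rfl | h
      · linarith
      · linarith [hflat a h]
    have h0a : x 0 < x a := calc
      x 0 ≤ x i₀ := le_of_forall_le_succ (Nat.zero_le i₀) fun j _ hj => (hflat j hj).ge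
      _ < x (i₀ + 1) := hup
      _ ≤ x a := le_of_forall_le_succ hi₀a fun j _ hj => not_lt.mp (hbefore_a j hj)
    have hca : x c < x a := calc
      x c ≤ x (a + 1) := le_of_forall_succ_le (by omega) fun j hj hjc =>
        not_lt.mp fun h => hbefore_c j hjc ⟨by omega, h⟩
      _ < x a := ha (by omega)
    exact hx.false_of_zigzag hc'.1 hci hi h0a hca hc'.2 (by omega)

theorem exists_twoTurn (hx : IsTwoCrossingPath x n) :
    ∃ ε : ℤˣ, ∃ a c : Fin (n + 1), ∀ i < n, x (i + 1) ≠ x i →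
      x (i + 1) - x i = twoTurn ε a c i := by
  obtain ⟨i₀, hi₀n, hflat, hi₀⟩ := exists_first_le (fun i => x (i + 1) ≠ x i) n
  simp only [ne_eq, not_not] at hflat
  rcases hi₀n.lt_or_eq with hi₀n | rfl
  · rcases lt_or_gt_of_ne (hi₀ hi₀n) with hdown | hup
    · obtain ⟨a, c, h⟩ :=
        hx.neg.exists_twoTurn_one hi₀n (by simpa using hflat) (by simpa using hdown)
      refine ⟨-1, a, c, fun i hi hne => ?_⟩
      have := h i hi (by simpa using hne)
      simp only [twoTurn, Units.val_neg, Units.val_one] at this ⊢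
      split_ifs at this ⊢ <;> omega
    · exact ⟨1, hx.exists_twoTurn_one hi₀n hflat hup⟩
  · exact ⟨1, 0, 0, fun i hi hne => absurd (hflat i hi) hne⟩

end IsTwoCrossingPath

lemma ladderGraph_adj_iff {p q : ℤ × Bool} :
    ladderGraph.Adj p q ↔ q.1 = p.1 ∧ q.2 = !p.2 ∨ |q.1 - p.1| = 1 ∧ q.2 = p.2 := by
  rcases p with ⟨i, a⟩
  rcases q with ⟨j, b⟩
  show (|i - j| = 1 ∧ a = b) ∨ (i = j ∧ a ≠ b) ↔ _
  rw [abs_sub_comm]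
  cases a <;> cases b <;> simp [eq_comm, or_comm]

structure IsLadderSAW (w : ℕ → ℤ × Bool) (n : ℕ) : Prop where
  injOn : Set.InjOn w (Set.Iic n)
  adj : ∀ i < n, ladderGraph.Adj (w i) (w (i + 1))

namespace IsLadderSAW

variable {w : ℕ → ℤ × Bool} {n : ℕ}

lemma snd_eq_of_isCrossing (hw : IsLadderSAW w n) {k : ℤ} {i : ℕ} (hi : i < n)
    (hc : IsCrossing (fun i => (w i).1) k i) : (w (i + 1)).2 = (w i).2 := by
  rcases ladderGraph_adj_iff.mp (hw.adj i hi) with h | h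
  · simp only [IsCrossing] at hc
    omega
  · exact h.2

/-- Each gap between two columns is bridged by only two edges, one in each row. -/
lemma isTwoCrossingPath (hw : IsLadderSAW w n) : IsTwoCrossingPath (fun i => (w i).1) n where
  abs_sub_le_one i hi := by
    rcases ladderGraph_adj_iff.mp (hw.adj i hi) with h | h
    · simp [h.1]
    · exact h.1.le
  not_three_crossings k i j l hij hjl hln hi hj hl := by
    have same_row : ∀ {i j}, i < j → j < n → IsCrossing (fun i => (w i).1) k i →
        IsCrossing (fun i => (w i).1) k j → (w i).2 ≠ (w j).2 := by
      intro i j hij hjn hi hj hrow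
      have hj' := hw.snd_eq_of_isCrossing hjn hj
      have : w i = w j ∨ w i = w (j + 1) := by
        simp only [IsCrossing] at hi hj
        rcases hi with hi | hi <;> rcases hj with hj | hj <;>
          [left; right; right; left] <;> exact Prod.ext (by omega) (by simp only [hj', hrow])
      rcases this with h | h <;>
        have := hw.injOn (by simp; omega) (by simp; omega) h <;> omega
    have pigeonhole : ∀ a b c : Bool, a = b ∨ b = c ∨ a = c := by decide
    rcases pigeonhole (w i).2 (w j).2 (w l).2 with h | h | h
    · exact same_row hij (by omega) hi hj h
    · exact same_row hjl hln hj hl h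
    · exact same_row (hij.trans hjl) hln hi hl h

lemma not_vertical_twice (hw : IsLadderSAW w n) {i : ℕ} (hi : i + 1 < n)
    (h₁ : (w (i + 1)).1 = (w i).1) (h₂ : (w (i + 2)).1 = (w (i + 1)).1) : False := by
  have vertical : ∀ j < n, (w (j + 1)).1 = (w j).1 → (w (j + 1)).2 = !(w j).2 := by
    intro j hj h
    rcases ladderGraph_adj_iff.mp (hw.adj j hj) with h' | h'
    · exact h'.2
    · simp [h] at h'
  have : w (i + 2) = w i := Prod.ext (h₂.trans h₁) <| by
    rw [vertical (i + 1) hi h₂, vertical i (by omega) h₁, Bool.not_not]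
  have := hw.injOn (by simp; omega) (by simp; omega) this
  omega

end IsLadderSAW

def stepWalk (v : ℕ → Bool) (d : ℕ → ℤ) : ℕ → ℤ × Bool
  | 0 => (0, false)
  | i + 1 => if v i then ((stepWalk v d i).1, !(stepWalk v d i).2)
      else ((stepWalk v d i).1 + d i, (stepWalk v d i).2)

section stepWalk

variable {v : ℕ → Bool} {d : ℕ → ℤ}

lemma stepWalk_adj {i : ℕ} (hd : |d i| = 1) :
    ladderGraph.Adj (stepWalk v d i) (stepWalk v d (i + 1)) := by
  rw [ladderGraph_adj_iff, stepWalk]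
  split_ifs <;> simp [hd]

lemma stepWalk_succ_fst_eq_iff {i : ℕ} (hd : d i ≠ 0) :
    (stepWalk v d (i + 1)).1 = (stepWalk v d i).1 ↔ v i = true := by
  rw [stepWalk]
  split_ifs with h <;> simp [h, hd]

lemma stepWalk_one_injective (hv : ∀ i, v i = true → v (i + 1) = false) :
    Function.Injective (stepWalk v fun _ => 1) := by
  set x := fun i => (stepWalk v (fun _ => 1) i).1
  have hmono : Monotone x := monotone_nat_of_le_succ fun i => by
    simp only [x, stepWalk]
    split_ifs <;> simp
  have vertical : ∀ {i j}, i ≤ j → x i = x j → ∀ m, i ≤ m → m < j → v m = true := by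
    intro i j hij hx m him hmj
    refine (stepWalk_succ_fst_eq_iff one_ne_zero).mp (le_antisymm ?_ (hmono (Nat.le_succ m)))
    exact (hmono (Nat.succ_le_of_lt hmj)).trans (hx ▸ hmono him)
  suffices ∀ i j, i < j → stepWalk v (fun _ => 1) i ≠ stepWalk v (fun _ => 1) j by
    intro i j h
    by_contra hne
    rcases Nat.lt_or_gt_of_ne hne with hij | hij
    exacts [this i j hij h, this j i hij h.symm]
  intro i j hij h
  have hv' := vertical hij.le (congrArg Prod.fst h)
  rcases (Nat.succ_le_of_lt hij).eq_or_lt with rfl | hij'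
  · have := congrArg Prod.snd h
    simp [stepWalk, hv' i le_rfl (Nat.lt_succ_self i)] at this
  · simpa [hv i (hv' i le_rfl hij)] using hv' (i + 1) (Nat.le_succ i) hij'

lemma eq_stepWalk {w : ℕ → ℤ × Bool} {n : ℕ} (h0 : w 0 = (0, false))
    (hadj : ∀ i < n, ladderGraph.Adj (w i) (w (i + 1)))
    (hv : ∀ i < n, v i = true ↔ (w (i + 1)).1 = (w i).1)
    (hd : ∀ i < n, (w (i + 1)).1 ≠ (w i).1 → (w (i + 1)).1 - (w i).1 = d i) :
    ∀ i ≤ n, w i = stepWalk v d i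
  | 0, _ => h0
  | i + 1, hi => by
    rw [stepWalk, ← eq_stepWalk h0 hadj hv hd i (by omega)]
    rcases ladderGraph_adj_iff.mp (hadj i hi) with ⟨h1, h2⟩ | ⟨h1, h2⟩
    · rw [if_pos ((hv i hi).mpr h1)]
      exact Prod.ext h1 h2
    · have hne : (w (i + 1)).1 ≠ (w i).1 := by
        intro h
        simp [h] at h1
      rw [if_neg (mt (hv i hi).mp hne)]
      exact Prod.ext (by linarith [hd i hi hne]) h2

end stepWalk

abbrev LadderSAW (n : ℕ) :=
  {p : Fin (n + 1) → ℤ × Bool // p 0 = (0, false) ∧ Function.Injective p ∧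
    ∀ i : Fin n, ladderGraph.Adj (p i.castSucc) (p i.succ)}

namespace LadderSAW

variable {n : ℕ}

lemma isLadderSAW (p : LadderSAW n) : IsLadderSAW (fun i : ℕ => p.1 (Fin.clamp i n)) n where
  injOn i hi j hj h := by
    have := Fin.val_eq_of_eq (p.2.2.1 h)
    simp only [Set.mem_Iic, Fin.coe_clamp] at hi hj this
    omega
  adj i hi := by
    convert p.2.2.2 ⟨i, hi⟩ using 2 <;> ext <;> simp <;> omega

theorem exists_eq_stepWalk (p : LadderSAW n) :
    ∃ e : sparseBits n × ℤˣ × Fin (n + 1) × Fin (n + 1),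
      ∀ j, p.1 j = stepWalk e.1 (twoTurn e.2.1 e.2.2.1 e.2.2.2) j := by
  set w := fun i : ℕ => p.1 (Fin.clamp i n)
  have hw := p.isLadderSAW
  set v := fun i => decide (i < n ∧ (w (i + 1)).1 = (w i).1)
  have hv : v ∈ sparseBits n := by
    refine ⟨fun i hi => by simp [v, hi.not_gt], fun i hi => ?_⟩
    by_contra hi'
    simp only [v, Bool.not_eq_false, decide_eq_true_eq] at hi hi'
    exact hw.not_vertical_twice hi'.1 hi.2 hi'.2
  obtain ⟨ε, a, c, hturn⟩ := hw.isTwoCrossingPath.exists_twoTurn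
  refine ⟨(⟨v, hv⟩, ε, a, c), fun j => ?_⟩
  have h0 : w 0 = (0, false) := by
    rw [← p.2.1]
    exact congrArg p.1 (Fin.ext (by simp))
  have := eq_stepWalk (v := v) h0 hw.adj (fun i hi => by simp [v, hi]) hturn j (by omega)
  exact (congrArg p.1 (Fin.ext (by simp; omega) : Fin.clamp j n = j)).symm.trans this

lemma exists_injective_code :
    ∃ f : LadderSAW n → sparseBits n × ℤˣ × Fin (n + 1) × Fin (n + 1), Function.Injective f := by
  choose f hf using exists_eq_stepWalk (n := n)
  exact ⟨f, fun p q h => Subtype.ext <| funext fun j => by rw [hf p, hf q, h]⟩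

instance : Finite (LadderSAW n) :=
  let ⟨_, hf⟩ := exists_injective_code (n := n)
  Finite.of_injective _ hf

def staircase (v : sparseBits n) : LadderSAW n :=
  ⟨fun j => stepWalk v.1 (fun _ => 1) j, rfl,
    (stepWalk_one_injective v.2.2).comp Fin.val_injective,
    fun i => by simpa using stepWalk_adj (v := v.1) (d := fun _ => 1) (i := i) abs_one⟩

lemma staircase_injective : Function.Injective (staircase (n := n)) := by
  intro v v' h
  have hw : ∀ j ≤ n, stepWalk v.1 (fun _ => 1) j = stepWalk v'.1 (fun _ => 1) j := fun j hj =>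
    congrFun (congrArg Subtype.val h) ⟨j, by omega⟩
  refine Subtype.ext <| funext fun i => ?_
  by_cases hi : i < n
  · rw [← Bool.coe_iff_coe, ← stepWalk_succ_fst_eq_iff (d := fun _ => 1) one_ne_zero,
      ← stepWalk_succ_fst_eq_iff (d := fun _ => 1) one_ne_zero, hw i hi.le, hw (i + 1) hi]
  · rw [v.2.1 i (by omega), v'.2.1 i (by omega)]

end LadderSAW

theorem fib_le_ladderSawCount (n : ℕ) : Nat.fib (n + 2) ≤ ladderSawCount n :=
  card_sparseBits n ▸ Nat.card_le_card_of_injective _ LadderSAW.staircase_injective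

theorem ladderSawCount_le (n : ℕ) : ladderSawCount n ≤ Nat.fib (n + 2) * (2 * (n + 1) ^ 2) := by
  obtain ⟨f, hf⟩ := LadderSAW.exists_injective_code (n := n)
  calc ladderSawCount n ≤ Nat.card (sparseBits n × ℤˣ × Fin (n + 1) × Fin (n + 1)) :=
        Nat.card_le_card_of_injective f hf
    _ = Nat.fib (n + 2) * (2 * (n + 1) ^ 2) := by
        rw [Nat.card_prod, Nat.card_prod, Nat.card_prod, card_sparseBits, Nat.card_eq_fintype_card,
          Fintype.card_units_int, Nat.card_eq_fintype_card, Fintype.card_fin]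
        ring

/-- The connective constant of the ladder graph is the golden mean `(1+√5)/2`. -/
theorem ladder_connective_constant :
    Tendsto (fun n : ℕ => (ladderSawCount n : ℝ) ^ ((1 : ℝ) / n)) atTop
      (nhds ((1 + Real.sqrt 5) / 2)) := by
  refine tendsto_rpow_one_div_of_pow_le_of_le (C := 2 * φ) 2 goldenRatio_pos (fun n => ?_)
    (fun n => ?_)
  · exact (goldenRatio_pow_le_fib n).trans (by exact_mod_cast fib_le_ladderSawCount n)
  · calc (ladderSawCount n : ℝ) ≤ Nat.fib (n + 2) * (2 * (n + 1) ^ 2) := by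
          exact_mod_cast ladderSawCount_le n
      _ ≤ φ ^ (n + 1) * (2 * (n + 1) ^ 2) := by gcongr; exact fib_le_goldenRatio_pow (n + 1)
      _ = 2 * φ * (n + 1) ^ 2 * φ ^ n := by ring
end

section
/- Let $g(x) = x^2 + x^3$. Suppose a sequence $(\mu_k)_{k \ge 0}$ of reals in $(1,2]$ satisfies $\mu_k^{-1} = g(\mu_{k+1}^{-1})$ for all $k$, with each $\mu_{k+1} \in (1,2]$. Then $\mu_k \to \phi$ monotonically, where $\phi = \frac{1+\sqrt 5}{2}$, and moreover $-\left(\frac{4}{7}\right)^k \le \mu_k^{-1} - \phi^{-1} \le \left(\frac{2}{7-\sqrt 5}\right)^k$ for all $k \ge 1$. -/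
open Filter

/-- Sign propagation: if `x = y * Q` with `x ≥ 0` and `Q > 0` then `y ≥ 0`. -/
lemma fisher_aux_sign (x y Q : ℝ) (hE : x = y * Q) (hx : 0 ≤ x) (hQ : 0 < Q) : 0 ≤ y := by
  by_contra h
  push_neg at h
  nlinarith [mul_neg_of_neg_of_pos h hQ]

/-- Contraction step: if `x = y * Q` with `y ≥ 0` and `Q * R ≥ 1` then `y ≤ R * x`. -/
lemma fisher_aux_step (x y Q R : ℝ) (hE : x = y * Q) (hy : 0 ≤ y) (hQR : 1 ≤ Q * R) :
    y ≤ R * x := by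
  have h := mul_le_mul_of_nonneg_left hQR hy
  rw [mul_one] at h
  calc y ≤ y * (Q * R) := h
    _ = R * (y * Q) := by ring
    _ = R * x := by rw [hE]

/-- Monotonicity step: if `x = y * Q` with `y ≥ 0` and `Q ≥ 1` then `y ≤ x`. -/
lemma fisher_aux_mono (x y Q : ℝ) (hE : x = y * Q) (hy : 0 ≤ y) (hQ : 1 ≤ Q) : y ≤ x := by
  have h := mul_le_mul_of_nonneg_left hQ hy
  rw [mul_one] at h
  rw [hE]
  exact h

set_option maxHeartbeats 800000 in
/-- The iterated Fisher transformation for cubic graphs: if `μ k ∈ (1,2]` and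
`μ k⁻¹ = g (μ (k+1)⁻¹)` with `g x = x^2 + x^3`, then `μ k` converges monotonically
to the golden mean `φ`, with the stated rate of convergence. -/
theorem fisher_iteration_converges (μ : ℕ → ℝ)
    (hmem : ∀ k, μ k ∈ Set.Ioc (1 : ℝ) 2)
    (hrec : ∀ k, (μ k)⁻¹ = ((μ (k + 1))⁻¹) ^ 2 + ((μ (k + 1))⁻¹) ^ 3) :
    (Tendsto μ atTop (nhds ((1 + Real.sqrt 5) / 2))) ∧
    (Monotone μ ∨ Antitone μ) ∧
    (∀ k, 1 ≤ k →
      -((4 / 7 : ℝ) ^ k) ≤ (μ k)⁻¹ - ((1 + Real.sqrt 5) / 2)⁻¹ ∧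
      (μ k)⁻¹ - ((1 + Real.sqrt 5) / 2)⁻¹ ≤ (2 / (7 - Real.sqrt 5)) ^ k) := by
  set s := Real.sqrt 5 with hsdef
  have hs : s ^ 2 = 5 := Real.sq_sqrt (by norm_num)
  have hs0 : 0 ≤ s := Real.sqrt_nonneg 5
  have hs2 : 2 < s := by nlinarith
  have hs3 : s < 3 := by nlinarith
  set c : ℝ := ((1 + s) / 2)⁻¹ with hcdef
  have hc : c = (s - 1) / 2 := by
    rw [hcdef]
    exact inv_eq_of_mul_eq_one_right (by linear_combination hs / 4)
  have hc1 : 1 / 2 < c := by rw [hc]; linarith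
  have hc2 : c < 1 := by rw [hc]; linarith
  -- basic bounds on a k := (μ k)⁻¹
  have hμpos : ∀ k, 0 < μ k := fun k => lt_trans one_pos (hmem k).1
  have hainv : ∀ k, μ k * (μ k)⁻¹ = 1 := fun k => mul_inv_cancel₀ (ne_of_gt (hμpos k))
  have hapos : ∀ k, 0 < (μ k)⁻¹ := fun k => inv_pos.mpr (hμpos k)
  have ha : ∀ k, 1 / 2 ≤ (μ k)⁻¹ ∧ (μ k)⁻¹ < 1 := by
    intro k
    obtain ⟨h1, h2⟩ := hmem k
    constructor
    · nlinarith [hainv k, hapos k]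
    · nlinarith [hainv k, hapos k]
  -- key algebraic identity
  have hq : ∀ k, (μ k)⁻¹ - c = ((μ (k + 1))⁻¹ - c) *
      ((μ (k + 1))⁻¹ + c + ((μ (k + 1))⁻¹) ^ 2 + c * (μ (k + 1))⁻¹ + c ^ 2) := by
    intro k
    have hcc : c ^ 2 + c ^ 3 = c := by rw [hc]; linear_combination ((s - 1) / 8) * hs
    rw [hrec k]
    linear_combination hcc
  -- lower bounds on the multiplier Q(t) = t + c + t² + c t + c²
  have hqlb : ∀ t : ℝ, 1 / 2 ≤ t → (6 + s) / 4 ≤ t + c + t ^ 2 + c * t + c ^ 2 := by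
    intro t ht
    rw [hc]
    nlinarith [mul_nonneg (by linarith : (0:ℝ) ≤ t - 1 / 2)
      (by linarith : (0:ℝ) ≤ t + (s + 2) / 2)]
  have hqlb2 : ∀ t : ℝ, c ≤ t → (7 - s) / 2 ≤ t + c + t ^ 2 + c * t + c ^ 2 := by
    intro t ht
    have hct : (0:ℝ) ≤ t - c := by linarith
    nlinarith [mul_nonneg hct (by nlinarith : (0:ℝ) ≤ 1 + t + 2 * c), hc]
  -- the two contraction rates
  set r : ℝ := 2 / (7 - s) with hrdef
  have hr7 : (0:ℝ) < 7 - s := by linarith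
  have hrpos : 0 < r := by positivity
  have hrmul : r * (7 - s) = 2 := by rw [hrdef]; field_simp
  have hrlt : r < 1 := by rw [hrdef, div_lt_one hr7]; linarith
  set r2 : ℝ := 4 / (6 + s) with hr2def
  have hr6 : (0:ℝ) < 6 + s := by linarith
  have hr2pos : 0 < r2 := by positivity
  have hr2mul : r2 * (6 + s) = 4 := by rw [hr2def]; field_simp
  have hr2lt : r2 < 1 := by rw [hr2def, div_lt_one hr6]; linarith
  have hr2le : r2 ≤ 4 / 7 := by
    rw [hr2def, div_le_div_iff₀ hr6 (by norm_num)]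
    linarith
  rcases le_or_gt c ((μ 0)⁻¹) with hcase | hcase
  · -- case A : all terms are ≥ c, μ is monotone increasing
    have hA : ∀ k, c ≤ (μ k)⁻¹ ∧ (μ k)⁻¹ - c ≤ ((μ 0)⁻¹ - c) * r ^ k := by
      intro k
      induction k with
      | zero => exact ⟨hcase, by simp⟩
      | succ n ih =>
        have hE := hq n
        have hQ1 := hqlb _ (ha (n + 1)).1
        have hQpos : (0:ℝ) < (μ (n + 1))⁻¹ + c + ((μ (n + 1))⁻¹) ^ 2 +
            c * (μ (n + 1))⁻¹ + c ^ 2 := by linarith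
        have h1 : c ≤ (μ (n + 1))⁻¹ := by
          have := fisher_aux_sign _ _ _ hE (by linarith [ih.1]) hQpos
          linarith
        have hQ2 := hqlb2 _ h1
        have hqr : 1 ≤ ((μ (n + 1))⁻¹ + c + ((μ (n + 1))⁻¹) ^ 2 +
            c * (μ (n + 1))⁻¹ + c ^ 2) * r := by
          linarith [mul_le_mul_of_nonneg_right hQ2 (le_of_lt hrpos), hrmul]
        have hstep : (μ (n + 1))⁻¹ - c ≤ r * ((μ n)⁻¹ - c) :=
          fisher_aux_step _ _ _ _ hE (by linarith) hqr
        refine ⟨h1, ?_⟩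
        calc (μ (n + 1))⁻¹ - c ≤ r * ((μ n)⁻¹ - c) := hstep
          _ ≤ r * (((μ 0)⁻¹ - c) * r ^ n) :=
            mul_le_mul_of_nonneg_left ih.2 (le_of_lt hrpos)
          _ = ((μ 0)⁻¹ - c) * r ^ (n + 1) := by ring
    have hmono : Monotone μ := by
      apply monotone_nat_of_le_succ
      intro n
      have hE := hq n
      have hQ2 := hqlb2 _ (hA (n + 1)).1
      have hle : (μ (n + 1))⁻¹ ≤ (μ n)⁻¹ := by
        have := fisher_aux_mono _ _ _ hE (by linarith [(hA (n + 1)).1]) (by linarith)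
        linarith
      have := (inv_le_inv₀ (hapos n) (hapos (n + 1))).mpr hle
      rwa [inv_inv, inv_inv] at this
    have hconv : Tendsto μ atTop (nhds ((1 + s) / 2)) := by
      have h0 : Tendsto (fun k : ℕ => ((μ 0)⁻¹ - c) * r ^ k) atTop (nhds 0) := by
        have := (tendsto_pow_atTop_nhds_zero_of_lt_one (le_of_lt hrpos) hrlt).const_mul
          ((μ 0)⁻¹ - c)
        simpa using this
      have hsq : Tendsto (fun k : ℕ => (μ k)⁻¹ - c) atTop (nhds 0) := by
        apply tendsto_of_tendsto_of_tendsto_of_le_of_le tendsto_const_nhds h0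
        · intro k; simp only [Pi.zero_apply]; linarith [(hA k).1]
        · intro k; exact (hA k).2
      have hac : Tendsto (fun k : ℕ => (μ k)⁻¹) atTop (nhds c) := by
        have := hsq.add_const c
        simpa using this
      have := hac.inv₀ (by linarith : c ≠ 0)
      simp only [inv_inv] at this
      have hcinv : c⁻¹ = (1 + s) / 2 := by rw [hcdef, inv_inv]
      rwa [hcinv] at this
    refine ⟨hconv, Or.inl hmono, ?_⟩
    intro k _
    constructor
    · have : (0:ℝ) < (4 / 7 : ℝ) ^ k := by positivity
      linarith [(hA k).1]
    · have h1 : ((μ 0)⁻¹ - c) * r ^ k ≤ r ^ k := by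
        apply mul_le_of_le_one_left (by positivity)
        linarith [(ha 0).2]
      linarith [(hA k).2]
  · -- case B : all terms are ≤ c, μ is antitone
    have hB : ∀ k, (μ k)⁻¹ ≤ c ∧ c - (μ k)⁻¹ ≤ (c - (μ 0)⁻¹) * r2 ^ k := by
      intro k
      induction k with
      | zero => exact ⟨le_of_lt hcase, by simp⟩
      | succ n ih =>
        have hE := hq n
        have hE' : c - (μ n)⁻¹ = (c - (μ (n + 1))⁻¹) *
            ((μ (n + 1))⁻¹ + c + ((μ (n + 1))⁻¹) ^ 2 + c * (μ (n + 1))⁻¹ + c ^ 2) := by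
          linear_combination -hE
        have hQ1 := hqlb _ (ha (n + 1)).1
        have hQpos : (0:ℝ) < (μ (n + 1))⁻¹ + c + ((μ (n + 1))⁻¹) ^ 2 +
            c * (μ (n + 1))⁻¹ + c ^ 2 := by linarith
        have h1 : (μ (n + 1))⁻¹ ≤ c := by
          have := fisher_aux_sign _ _ _ hE' (by linarith [ih.1]) hQpos
          linarith
        have hqr : 1 ≤ ((μ (n + 1))⁻¹ + c + ((μ (n + 1))⁻¹) ^ 2 +
            c * (μ (n + 1))⁻¹ + c ^ 2) * r2 := by
          linarith [mul_le_mul_of_nonneg_right hQ1 (le_of_lt hr2pos), hr2mul]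
        have hstep : c - (μ (n + 1))⁻¹ ≤ r2 * (c - (μ n)⁻¹) :=
          fisher_aux_step _ _ _ _ hE' (by linarith) hqr
        refine ⟨h1, ?_⟩
        calc c - (μ (n + 1))⁻¹ ≤ r2 * (c - (μ n)⁻¹) := hstep
          _ ≤ r2 * ((c - (μ 0)⁻¹) * r2 ^ n) :=
            mul_le_mul_of_nonneg_left ih.2 (le_of_lt hr2pos)
          _ = (c - (μ 0)⁻¹) * r2 ^ (n + 1) := by ring
    have hanti : Antitone μ := by
      apply antitone_nat_of_succ_le
      intro n
      have hE := hq n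
      have hE' : c - (μ n)⁻¹ = (c - (μ (n + 1))⁻¹) *
          ((μ (n + 1))⁻¹ + c + ((μ (n + 1))⁻¹) ^ 2 + c * (μ (n + 1))⁻¹ + c ^ 2) := by
        linear_combination -hE
      have hQ1 := hqlb _ (ha (n + 1)).1
      have hle : (μ n)⁻¹ ≤ (μ (n + 1))⁻¹ := by
        have := fisher_aux_mono _ _ _ hE' (by linarith [(hB (n + 1)).1]) (by linarith)
        linarith
      have := (inv_le_inv₀ (hapos (n + 1)) (hapos n)).mpr hle
      rwa [inv_inv, inv_inv] at this
    have hconv : Tendsto μ atTop (nhds ((1 + s) / 2)) := by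
      have h0 : Tendsto (fun k : ℕ => -((c - (μ 0)⁻¹) * r2 ^ k)) atTop (nhds 0) := by
        have := ((tendsto_pow_atTop_nhds_zero_of_lt_one (le_of_lt hr2pos) hr2lt).const_mul
          (c - (μ 0)⁻¹)).neg
        simpa using this
      have hsq : Tendsto (fun k : ℕ => (μ k)⁻¹ - c) atTop (nhds 0) := by
        apply tendsto_of_tendsto_of_tendsto_of_le_of_le h0 tendsto_const_nhds
        · intro k; linarith [(hB k).2]
        · intro k; simp only [Pi.zero_apply]; linarith [(hB k).1]
      have hac : Tendsto (fun k : ℕ => (μ k)⁻¹) atTop (nhds c) := by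
        have := hsq.add_const c
        simpa using this
      have := hac.inv₀ (by linarith : c ≠ 0)
      simp only [inv_inv] at this
      have hcinv : c⁻¹ = (1 + s) / 2 := by rw [hcdef, inv_inv]
      rwa [hcinv] at this
    refine ⟨hconv, Or.inr hanti, ?_⟩
    intro k _
    constructor
    · have h1 : (c - (μ 0)⁻¹) * r2 ^ k ≤ r2 ^ k := by
        apply mul_le_of_le_one_left (by positivity)
        linarith [(ha 0).1]
      have h2 : r2 ^ k ≤ (4 / 7 : ℝ) ^ k := pow_le_pow_left₀ (le_of_lt hr2pos) hr2le k
      linarith [(hB k).2]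
    · have : (0:ℝ) < r ^ k := by positivity
      linarith [(hB k).1]
end

section
/- Let $\mu = \sqrt{2+\sqrt 2}$ and let $h(x) = x^3 + x^4$. There exists a unique $\tilde\mu > 1$ with $h(\tilde\mu^{-1}) = \mu^{-2}$, and this $\tilde\mu$ satisfies $1.75 < \tilde\mu < 1.751$. -/
/-!
The map `t ↦ t⁻¹ ^ 3 + t⁻¹ ^ 4` is continuous and strictly decreasing on `(0, ∞)`, and
`μ⁻² = (2 + √2)⁻¹` lies strictly between its values at `1.751` and `1.75` (this only needs
`1.414 < √2 < 1.415`). The intermediate value theorem gives a root in `[1.75, 1.751]`, and strict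
monotonicity makes it the only root in `(1, ∞)` and puts it strictly inside the interval.
-/

open Set

theorem StrictAntiOn.existsUnique_eq_and_bounds {g : ℝ → ℝ} {m a b c : ℝ}
    (hg : StrictAntiOn g (Ioi m)) (hcont : ContinuousOn g (Icc a b)) (hma : m < a)
    (hab : a ≤ b) (hgb : g b < c) (hga : c < g a) :
    (∃! t, m < t ∧ g t = c) ∧ ∀ t, m < t → g t = c → a < t ∧ t < b := by
  have hbounds : ∀ t, m < t → g t = c → a < t ∧ t < b := by
    rintro t hmt rfl
    have hmb : m < b := hma.trans_le hab
    exact ⟨(hg.lt_iff_gt hmt hma).1 hga, (hg.lt_iff_gt hmb hmt).1 hgb⟩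
  obtain ⟨t, ⟨hat, -⟩, hgt⟩ := intermediate_value_Icc' hab hcont ⟨hgb.le, hga.le⟩
  have hmt : m < t := hma.trans_le hat
  exact ⟨⟨t, ⟨hmt, hgt⟩, fun s ⟨hms, hgs⟩ => hg.injOn hms hmt (hgs.trans hgt.symm)⟩, hbounds⟩

theorem strictAntiOn_inv_pow_three_add_inv_pow_four :
    StrictAntiOn (fun t : ℝ => t⁻¹ ^ 3 + t⁻¹ ^ 4) (Ioi 0) := by
  intro s hs t ht hst
  have hinv : t⁻¹ < s⁻¹ := inv_strictAntiOn hs ht hst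
  have h0 : 0 ≤ t⁻¹ := inv_nonneg.2 (le_of_lt ht)
  dsimp only
  gcongr

theorem continuousOn_inv_pow_three_add_inv_pow_four {s : Set ℝ} (hs : ∀ t ∈ s, t ≠ 0) :
    ContinuousOn (fun t : ℝ => t⁻¹ ^ 3 + t⁻¹ ^ 4) s := by
  fun_prop (disch := assumption)

theorem inv_sqrt_two_add_sqrt_two_sq : (√(2 + √2))⁻¹ ^ 2 = (2 + √2)⁻¹ := by
  rw [inv_pow, Real.sq_sqrt (by positivity)]

theorem sqrt_two_mem_Ioo : √2 ∈ Ioo (1.414 : ℝ) 1.415 := by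
  constructor
  · rw [Real.lt_sqrt (by norm_num)]; norm_num
  · rw [Real.sqrt_lt' (by norm_num)]; norm_num

theorem inv_pow_three_add_inv_pow_four_bounds :
    (1.751 : ℝ)⁻¹ ^ 3 + (1.751 : ℝ)⁻¹ ^ 4 < (2 + √2)⁻¹ ∧
      (2 + √2)⁻¹ < (1.75 : ℝ)⁻¹ ^ 3 + (1.75 : ℝ)⁻¹ ^ 4 := by
  obtain ⟨hlo, hhi⟩ := sqrt_two_mem_Ioo
  constructor
  · rw [lt_inv_comm₀ (by norm_num) (by positivity)]
    norm_num
    linarith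
  · rw [inv_lt_comm₀ (by positivity) (by norm_num)]
    norm_num
    linarith

/-- Fisher transformation at alternate vertices of the hexagonal lattice:
with `μ = √(2+√2)` and `h x = x^3 + x^4`, there is a unique `t > 1` with
`h (t⁻¹) = μ⁻²`, and it satisfies `1.75 < t < 1.751`. -/
theorem fisher_hexagonal_value :
    (∃! t : ℝ, 1 < t ∧
      (t⁻¹) ^ 3 + (t⁻¹) ^ 4 = ((Real.sqrt (2 + Real.sqrt 2))⁻¹) ^ 2) ∧
    ∀ t : ℝ, 1 < t →
      (t⁻¹) ^ 3 + (t⁻¹) ^ 4 = ((Real.sqrt (2 + Real.sqrt 2))⁻¹) ^ 2 →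
      1.75 < t ∧ t < 1.751 := by
  obtain ⟨hlo, hhi⟩ := inv_pow_three_add_inv_pow_four_bounds
  rw [inv_sqrt_two_add_sqrt_two_sq]
  exact StrictAntiOn.existsUnique_eq_and_bounds
    (strictAntiOn_inv_pow_three_add_inv_pow_four.mono (Ioi_subset_Ioi zero_le_one))
    (continuousOn_inv_pow_three_add_inv_pow_four fun t ht => by linarith [ht.1])
    (by norm_num) (by norm_num) hlo hhi
end
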